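/- Fix s > 0 with c₀, τ₀ as on the curve C₂ (so that m_{τ₀}(s) = c₀ and m_{τ₀}'(s) = 0). Then 0 < τ₀ < 1/3 and 0 < c₀ < 1. -/

import Mathlib

/-!
With `t = 2 s` one has `c₀² = 4 (cosh t - 1) / (t (t + sinh t))` and
`τ₀ = 4 (sinh t - t) / (t² (t + sinh t))`, so the claim reduces to
`4 (cosh t - 1) < t (t + sinh t)` and `12 (sinh t - t) < t² (t + sinh t)` for `t > 0`.
The two sides of each inequality agree to fourth order at `t = 0`; differentiating the difference
repeatedly, every derivative vanishes at `0` until one is evidently positive, and integrating back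
from `0` gives positivity at each stage.
-/

open Real Set

lemma pos_of_hasDerivAt_of_pos {f f' : ℝ → ℝ} (hf : ∀ x, HasDerivAt f (f' x) x)
    (h₀ : f 0 = 0) (hf' : ∀ x, 0 < x → 0 < f' x) {x : ℝ} (hx : 0 < x) : 0 < f x := by
  have hmono : StrictMonoOn f (Ici 0) :=
    strictMonoOn_of_hasDerivWithinAt_pos (convex_Ici 0)
      (fun y _ => (hf y).continuousAt.continuousWithinAt)
      (fun y _ => (hf y).hasDerivWithinAt)
      (fun y hy => hf' y (by rwa [interior_Ici] at hy))
  simpa [h₀] using hmono self_mem_Ici hx.le hx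

section HyperbolicInequalities

variable {t : ℝ}

lemma sinh_lt_mul_cosh (ht : 0 < t) : sinh t < t * cosh t := by
  have hd (x : ℝ) : HasDerivAt (fun x => x * cosh x - sinh x) (x * sinh x) x :=
    ((hasDerivAt_id' x).fun_mul (hasDerivAt_cosh x)).fun_sub (hasDerivAt_sinh x)
      |>.congr_deriv (by ring)
  exact sub_pos.1 <| pos_of_hasDerivAt_of_pos hd (by simp)
    (fun x hx => mul_pos hx (sinh_pos_iff.2 hx)) ht

lemma two_mul_cosh_sub_one_lt (ht : 0 < t) : 2 * (cosh t - 1) < t * sinh t := by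
  have hd (x : ℝ) :
      HasDerivAt (fun x => x * sinh x - 2 * (cosh x - 1)) (x * cosh x - sinh x) x :=
    ((hasDerivAt_id' x).fun_mul (hasDerivAt_sinh x)).fun_sub
      (((hasDerivAt_cosh x).sub_const 1).const_mul 2) |>.congr_deriv (by ring)
  exact sub_pos.1 <| pos_of_hasDerivAt_of_pos hd (by simp)
    (fun x hx => sub_pos.2 (sinh_lt_mul_cosh hx)) ht

lemma three_mul_sinh_lt (ht : 0 < t) : 3 * sinh t < t * (2 + cosh t) := by
  have hd (x : ℝ) :
      HasDerivAt (fun x => x * (2 + cosh x) - 3 * sinh x) (x * sinh x - 2 * (cosh x - 1)) x :=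
    ((hasDerivAt_id' x).fun_mul ((hasDerivAt_cosh x).const_add 2)).fun_sub
      ((hasDerivAt_sinh x).const_mul 3) |>.congr_deriv (by ring)
  exact sub_pos.1 <| pos_of_hasDerivAt_of_pos hd (by simp)
    (fun x hx => sub_pos.2 (two_mul_cosh_sub_one_lt hx)) ht

lemma four_mul_cosh_sub_one_lt (ht : 0 < t) : 4 * (cosh t - 1) < t * (t + sinh t) := by
  have hd (x : ℝ) : HasDerivAt (fun x => x * (x + sinh x) - 4 * (cosh x - 1))
      (x * (2 + cosh x) - 3 * sinh x) x :=
    ((hasDerivAt_id' x).fun_mul ((hasDerivAt_id' x).fun_add (hasDerivAt_sinh x))).fun_sub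
      (((hasDerivAt_cosh x).sub_const 1).const_mul 4) |>.congr_deriv (by ring)
  exact sub_pos.1 <| pos_of_hasDerivAt_of_pos hd (by simp)
    (fun x hx => sub_pos.2 (three_mul_sinh_lt hx)) ht

lemma six_mul_cosh_sub_one_lt (ht : 0 < t) :
    6 * (cosh t - 1) < t * (6 * sinh t + t * cosh t) := by
  have hd (x : ℝ) : HasDerivAt (fun x => x * (6 * sinh x + x * cosh x) - 6 * (cosh x - 1))
      (8 * x * cosh x + x ^ 2 * sinh x) x :=
    ((hasDerivAt_id' x).fun_mul (((hasDerivAt_sinh x).const_mul 6).fun_add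
      ((hasDerivAt_id' x).fun_mul (hasDerivAt_cosh x)))).fun_sub
      (((hasDerivAt_cosh x).sub_const 1).const_mul 6) |>.congr_deriv (by ring)
  exact sub_pos.1 <| pos_of_hasDerivAt_of_pos hd (by simp) (fun x hx => by positivity) ht

lemma ten_mul_sinh_lt (ht : 0 < t) : 10 * sinh t < t * (6 + 4 * cosh t + t * sinh t) := by
  have hd (x : ℝ) : HasDerivAt (fun x => x * (6 + 4 * cosh x + x * sinh x) - 10 * sinh x)
      (x * (6 * sinh x + x * cosh x) - 6 * (cosh x - 1)) x :=
    ((hasDerivAt_id' x).fun_mul ((((hasDerivAt_cosh x).const_mul 4).const_add 6).fun_add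
      ((hasDerivAt_id' x).fun_mul (hasDerivAt_sinh x)))).fun_sub
      ((hasDerivAt_sinh x).const_mul 10) |>.congr_deriv (by ring)
  exact sub_pos.1 <| pos_of_hasDerivAt_of_pos hd (by simp)
    (fun x hx => sub_pos.2 (six_mul_cosh_sub_one_lt hx)) ht

lemma twelve_mul_cosh_sub_one_lt (ht : 0 < t) :
    12 * (cosh t - 1) < t * (3 * t + 2 * sinh t + t * cosh t) := by
  have hd (x : ℝ) :
      HasDerivAt (fun x => x * (3 * x + 2 * sinh x + x * cosh x) - 12 * (cosh x - 1))
        (x * (6 + 4 * cosh x + x * sinh x) - 10 * sinh x) x :=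
    ((hasDerivAt_id' x).fun_mul ((((hasDerivAt_id' x).const_mul 3).fun_add
      ((hasDerivAt_sinh x).const_mul 2)).fun_add
      ((hasDerivAt_id' x).fun_mul (hasDerivAt_cosh x)))).fun_sub
      (((hasDerivAt_cosh x).sub_const 1).const_mul 12) |>.congr_deriv (by ring)
  exact sub_pos.1 <| pos_of_hasDerivAt_of_pos hd (by simp)
    (fun x hx => sub_pos.2 (ten_mul_sinh_lt hx)) ht

lemma twelve_mul_sinh_sub_lt (ht : 0 < t) : 12 * (sinh t - t) < t ^ 2 * (t + sinh t) := by
  have hd (x : ℝ) : HasDerivAt (fun x => x ^ 2 * (x + sinh x) - 12 * (sinh x - x))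
      (x * (3 * x + 2 * sinh x + x * cosh x) - 12 * (cosh x - 1)) x :=
    ((hasDerivAt_pow 2 x).fun_mul ((hasDerivAt_id' x).fun_add (hasDerivAt_sinh x))).fun_sub
      (((hasDerivAt_sinh x).fun_sub (hasDerivAt_id' x)).const_mul 12) |>.congr_deriv (by ring)
  exact sub_pos.1 <| pos_of_hasDerivAt_of_pos hd (by simp)
    (fun x hx => sub_pos.2 (twelve_mul_cosh_sub_one_lt hx)) ht

end HyperbolicInequalities

section CurveC2

variable {s : ℝ}

lemma curveC2_speed_sq_eq (hs : 0 < s) :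
    (s ^ 2 / (2 * sinh s ^ 2) + s / (2 * tanh s))⁻¹
      = 4 * (cosh (2 * s) - 1) / (2 * s * (2 * s + sinh (2 * s))) := by
  have hsinh : 0 < sinh s := sinh_pos_iff.2 hs
  rw [tanh_eq_sinh_div_cosh, sinh_two_mul, cosh_two_mul, cosh_sq]
  field_simp
  ring

lemma curveC2_tension_eq (hs : 0 < s) :
    (s ^ 2 / (2 * sinh s ^ 2) + s / (2 * tanh s))⁻¹
        * (-(1 / (2 * sinh s ^ 2)) + 1 / (2 * s * tanh s))
      = 4 * (sinh (2 * s) - 2 * s) / ((2 * s) ^ 2 * (2 * s + sinh (2 * s))) := by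
  have hsinh : 0 < sinh s := sinh_pos_iff.2 hs
  rw [tanh_eq_sinh_div_cosh, sinh_two_mul]
  field_simp
  ring

end CurveC2

theorem curve_C2_parameter_region (s : ℝ) (hs : 0 < s)
    (c0sq : ℝ) (hc0 : c0sq = (s ^ 2 / (2 * Real.sinh s ^ 2) + s / (2 * Real.tanh s))⁻¹)
    (τ₀ : ℝ) (hτ₀ : τ₀ = c0sq * (-(1 / (2 * Real.sinh s ^ 2)) + 1 / (2 * s * Real.tanh s))) :
    0 < τ₀ ∧ τ₀ < 1/3 ∧ 0 < Real.sqrt c0sq ∧ Real.sqrt c0sq < 1 := by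
  subst hc0 hτ₀
  rw [curveC2_tension_eq hs, curveC2_speed_sq_eq hs]
  set t := 2 * s
  have ht : 0 < t := by positivity
  refine ⟨div_pos ?_ (by positivity), ?_, sqrt_pos.2 (div_pos ?_ (by positivity)), ?_⟩
  · linarith [self_lt_sinh_iff.2 ht]
  · rw [div_lt_iff₀ (by positivity)]
    linarith [twelve_mul_sinh_sub_lt ht]
  · linarith [one_lt_cosh.2 ht.ne']
  · rw [sqrt_lt' one_pos, one_pow, div_lt_one (by positivity)]
    exact four_mul_cosh_sub_one_lt ht
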